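/- Let I ≥ 2, J ≥ 2, let ν = (ν_1,...,ν_I)^T and π = (π_1,...,π_J)^T be probability vectors with all entries positive, with truncations ν* and π*. With K(q) = G_{K-1} D_{q*}^{-1} G_{K-1}^T + (1/q_K) e_{K-1} e_{K-1}^T for a probability vector q of length K with truncation q*, the matrix H = K(ν) ⊗ K(π) is invertible and H^{-1} = (T_{I-1}^T (D_{ν*} − ν* ν*^T) T_{I-1}) ⊗ (T_{J-1}^T (D_{π*} − π* π*^T) T_{J-1}), where T_h = G_h^{-1} is the h×h upper triangular matrix of ones. -/

import Mathlib

/-!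
Since `G 𝟙 = e`, the rank-one term of `K(q)` is `G (𝟙 𝟙ᵀ / q_K) Gᵀ`, so
`K(q) = G (D_{q*}⁻¹ + 𝟙 𝟙ᵀ / q_K) Gᵀ`. With `q_K = 1 - 𝟙ᵀ q*`, Sherman–Morrison inverts the middle
factor to `D_{q*} - q* q*ᵀ`, hence `K(q)⁻¹ = Tᵀ (D_{q*} - q* q*ᵀ) T` because `T = G⁻¹`.
The Kronecker product of the two inverses inverts `K(ν) ⊗ K(π)`.
-/

open Matrix
open scoped Kronecker

/-- `G_h`: the h×h matrix with 1's on the diagonal, −1's on the superdiagonal. -/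
def Gmat (h : ℕ) : Matrix (Fin h) (Fin h) ℝ :=
  Matrix.of fun i j => if i = j then 1 else if (j : ℕ) = (i : ℕ) + 1 then -1 else 0

/-- `T_h = G_h⁻¹`: the h×h upper triangular matrix of ones. -/
def Tmat (h : ℕ) : Matrix (Fin h) (Fin h) ℝ :=
  Matrix.of fun i j => if i ≤ j then 1 else 0

/-- `e_{K-1}`: the last standard unit vector of ℝ^{K-1}. -/
def lastUnitVec (h : ℕ) : Fin h → ℝ := fun i => if (i : ℕ) + 1 = h then 1 else 0

/-- `K(q) = G_{K-1} D_{q*}⁻¹ G_{K-1}ᵀ + (1/q_K) e_{K-1} e_{K-1}ᵀ`. -/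
noncomputable def Kmat {K : ℕ} (q : Fin (K + 1) → ℝ) : Matrix (Fin K) (Fin K) ℝ :=
  Gmat K * Matrix.diagonal (fun j : Fin K => (q j.castSucc)⁻¹) * (Gmat K)ᵀ +
    (1 / q (Fin.last K)) • Matrix.vecMulVec (lastUnitVec K) (lastUnitVec K)

lemma Gmat_mulVec_apply {h : ℕ} (v : Fin h → ℝ) (i : Fin h) :
    (Gmat h *ᵥ v) i = v i - if hi : (i : ℕ) + 1 < h then v ⟨i + 1, hi⟩ else 0 := by
  have hentry : ∀ l : Fin h, Gmat h i l * v l =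
      (if i = l then v l else 0) - (if (l : ℕ) = i + 1 then v l else 0) := by
    intro l
    simp only [Gmat, of_apply, Fin.ext_iff]
    split_ifs <;> first | (exfalso; omega) | ring
  rw [mulVec, dotProduct, Finset.sum_congr rfl fun l _ => hentry l, Finset.sum_sub_distrib,
    Finset.sum_ite_eq Finset.univ i, if_pos (Finset.mem_univ i)]
  congr 1
  split_ifs with hi
  · rw [Finset.sum_eq_single ⟨i + 1, hi⟩ (fun l _ hl => if_neg (fun h' => hl (Fin.ext h')))
      (fun h' => absurd (Finset.mem_univ _) h'), if_pos rfl]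
  · exact Finset.sum_eq_zero fun l _ => if_neg (by omega)

lemma Gmat_mul_Tmat (h : ℕ) : Gmat h * Tmat h = 1 := by
  ext i j
  change (Gmat h *ᵥ fun l => Tmat h l j) i = _
  rw [Gmat_mulVec_apply]
  simp only [Tmat, of_apply, one_apply, Fin.ext_iff, Fin.le_def]
  split_ifs <;> first | (exfalso; omega) | ring

lemma Tmat_mul_Gmat (h : ℕ) : Tmat h * Gmat h = 1 := mul_eq_one_comm.mp (Gmat_mul_Tmat h)

lemma Gmat_mulVec_one (h : ℕ) : Gmat h *ᵥ 1 = lastUnitVec h := by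
  ext i
  rw [Gmat_mulVec_apply]
  simp only [Pi.one_apply, lastUnitVec]
  split_ifs <;> first | (exfalso; omega) | ring

lemma Kmat_eq_Gmat_mul_mul_transpose {K : ℕ} (q : Fin (K + 1) → ℝ) :
    Kmat q = Gmat K * (diagonal (fun j : Fin K => (q j.castSucc)⁻¹) +
      (q (Fin.last K))⁻¹ • vecMulVec 1 1) * (Gmat K)ᵀ := by
  rw [Kmat, Matrix.mul_add, Matrix.add_mul, Matrix.mul_smul, Matrix.smul_mul, mul_vecMulVec,
    vecMulVec_mul, vecMul_transpose, Gmat_mulVec_one, one_div]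

lemma diagonal_inv_add_smul_vecMulVec_one_mul {𝕜 n : Type*} [Field 𝕜] [Fintype n]
    [DecidableEq n] (d : n → 𝕜) (hd : ∀ i, d i ≠ 0) {c : 𝕜} (hc : c ≠ 0)
    (hsum : ∑ i, d i = 1 - c) :
    (diagonal (fun i => (d i)⁻¹) + c⁻¹ • vecMulVec 1 1) * (diagonal d - vecMulVec d d) = 1 := by
  have hdiag : diagonal (fun i => (d i)⁻¹) * diagonal d = 1 := by
    rw [diagonal_mul_diagonal, ← diagonal_one]
    exact congrArg diagonal (funext fun i => inv_mul_cancel₀ (hd i))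
  have hinv_d : diagonal (fun i => (d i)⁻¹) *ᵥ d = 1 := by
    ext i
    simp [mulVec_diagonal, inv_mul_cancel₀ (hd i)]
  have hone_d : (1 : n → 𝕜) ⬝ᵥ d = 1 - c := by simpa [one_dotProduct] using hsum
  have hone_diag : (1 : n → 𝕜) ᵥ* diagonal d = d := by
    ext i
    simp [vecMul_diagonal]
  rw [Matrix.add_mul, Matrix.mul_sub, Matrix.mul_sub, hdiag, mul_vecMulVec, hinv_d,
    Matrix.smul_mul, Matrix.smul_mul, vecMulVec_mul, hone_diag, vecMulVec_mul_vecMulVec,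
    hone_d, vecMulVec_smul, smul_smul, mul_sub, mul_one, inv_mul_cancel₀ hc, sub_smul, one_smul]
  abel

lemma Kmat_mul_covariance {K : ℕ} (q : Fin (K + 1) → ℝ) (hq : ∀ i, q i ≠ 0)
    (hsum : ∑ i, q i = 1) :
    Kmat q * ((Tmat K)ᵀ *
        (diagonal (fun i : Fin K => q i.castSucc) -
          vecMulVec (fun i : Fin K => q i.castSucc) (fun i : Fin K => q i.castSucc)) *
        Tmat K) = 1 := by
  have hsum' : ∑ i : Fin K, q i.castSucc = 1 - q (Fin.last K) := by
    rw [Fin.sum_univ_castSucc] at hsum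
    linarith
  have hmiddle := diagonal_inv_add_smul_vecMulVec_one_mul (fun i : Fin K => q i.castSucc)
    (fun i => hq _) (hq (Fin.last K)) hsum'
  have hGT : (Gmat K)ᵀ * (Tmat K)ᵀ = 1 := by rw [← transpose_mul, Tmat_mul_Gmat, transpose_one]
  rw [Kmat_eq_Gmat_mul_mul_transpose]
  simp only [Matrix.mul_assoc]
  rw [← Matrix.mul_assoc (Gmat K)ᵀ, hGT, Matrix.one_mul, ← Matrix.mul_assoc _ (_ - _), hmiddle,
    Matrix.one_mul, Gmat_mul_Tmat]

theorem stmt6_general (k m : ℕ)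
    (ν : Fin (k + 1) → ℝ) (hνpos : ∀ i, 0 < ν i) (hνsum : ∑ i, ν i = 1)
    (pi : Fin (m + 1) → ℝ) (hπpos : ∀ j, 0 < pi j) (hπsum : ∑ j, pi j = 1)
    (H : Matrix (Fin k × Fin m) (Fin k × Fin m) ℝ)
    (hH : H = Kmat ν ⊗ₖ Kmat pi) :
    IsUnit H ∧
      H⁻¹ = ((Tmat k)ᵀ *
          (Matrix.diagonal (fun i : Fin k => ν i.castSucc) -
            Matrix.vecMulVec (fun i : Fin k => ν i.castSucc) (fun i : Fin k => ν i.castSucc)) *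
          Tmat k) ⊗ₖ
        ((Tmat m)ᵀ *
          (Matrix.diagonal (fun j : Fin m => pi j.castSucc) -
            Matrix.vecMulVec (fun j : Fin m => pi j.castSucc) (fun j : Fin m => pi j.castSucc)) *
          Tmat m) := by
  subst hH
  have hmul := congrArg₂ (· ⊗ₖ ·) (Kmat_mul_covariance ν (fun i => (hνpos i).ne') hνsum)
    (Kmat_mul_covariance pi (fun j => (hπpos j).ne') hπsum)
  rw [mul_kronecker_mul, one_kronecker_one] at hmul
  exact ⟨IsUnit.of_mul_eq_one _ hmul, inv_eq_right_inv hmul⟩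

/-- formula (H-1) of Corollary 3 of the paper: with `I = k+1`,
`J = m+1`, the matrix `H = K(ν) ⊗ K(π)` is invertible and
`H⁻¹ = (T_{I-1}ᵀ (D_{ν*} − ν* ν*ᵀ) T_{I-1}) ⊗ (T_{J-1}ᵀ (D_{π*} − π* π*ᵀ) T_{J-1})`. -/
theorem stmt6 (k m : ℕ) (hk : 1 ≤ k) (hm : 1 ≤ m)
    (ν : Fin (k + 1) → ℝ) (hνpos : ∀ i, 0 < ν i) (hνsum : ∑ i, ν i = 1)
    (pi : Fin (m + 1) → ℝ) (hπpos : ∀ j, 0 < pi j) (hπsum : ∑ j, pi j = 1)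
    (H : Matrix (Fin k × Fin m) (Fin k × Fin m) ℝ)
    (hH : H = Kmat ν ⊗ₖ Kmat pi) :
    IsUnit H ∧
      H⁻¹ = ((Tmat k)ᵀ *
          (Matrix.diagonal (fun i : Fin k => ν i.castSucc) -
            Matrix.vecMulVec (fun i : Fin k => ν i.castSucc) (fun i : Fin k => ν i.castSucc)) *
          Tmat k) ⊗ₖ
        ((Tmat m)ᵀ *
          (Matrix.diagonal (fun j : Fin m => pi j.castSucc) -
            Matrix.vecMulVec (fun j : Fin m => pi j.castSucc) (fun j : Fin m => pi j.castSucc)) *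
          Tmat m) :=
  stmt6_general k m ν hνpos hνsum pi hπpos hπsum H hH
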